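/- arXiv:1112.1517 — 4 statements merged into one kernel-verified Lean document; each statement's English description precedes it below -/
import Mathlib

section
/- Suppose mutation operator s2 is complementary to s1 on fitness function f, meaning: for every non-optimal state x with P_{s1}(x,x) = ρ_1 := max_y P_{s1}(y,y), it holds that P_{s2}(x,x) < ρ_1. Then the mixed strategy EA defined by q_{s2}(x) = 1 at every x achieving P_{s1}(x,x) = ρ_1 and q_{s1}(x) = 1 otherwise has spectral radius ρ_q = max_x [q_{s1}(x) P_{s1}(x,x) + q_{s2}(x) P_{s2}(x,x)] strictly less than ρ_1; hence its asymptotic convergence rate −ln ρ_q > −ln ρ_1. -/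
theorem Finset.sup'_ite_eq_sup'_lt {ι α : Type*} [LinearOrder α] {s : Finset ι}
    (hs : s.Nonempty) (f g : ι → α) (hg : ∀ i ∈ s, f i = s.sup' hs f → g i < s.sup' hs f) :
    s.sup' hs (fun i => if f i = s.sup' hs f then g i else f i) < s.sup' hs f := by
  refine (Finset.sup'_lt_iff hs).2 fun i hi => ?_
  split_ifs with hmax
  · exact hg i hi hmax
  · exact (Finset.le_sup' f hi).lt_of_ne hmax

theorem stmt6_general {S : Type*} [Fintype S] [Nonempty S]
    (P1 P2 : S → ℝ)
    (ρ1 : ℝ) (hρ1 : ρ1 = Finset.univ.sup' Finset.univ_nonempty P1)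
    (hcomp : ∀ x, P1 x = ρ1 → P2 x < ρ1) :
    Finset.univ.sup' Finset.univ_nonempty
        (fun x => if P1 x = ρ1 then P2 x else P1 x) < ρ1 ∧
      (0 < Finset.univ.sup' Finset.univ_nonempty
          (fun x => if P1 x = ρ1 then P2 x else P1 x) →
        -Real.log ρ1 <
          -Real.log (Finset.univ.sup' Finset.univ_nonempty
            (fun x => if P1 x = ρ1 then P2 x else P1 x))) := by
  subst hρ1
  have hlt := Finset.sup'_ite_eq_sup'_lt Finset.univ_nonempty P1 P2 fun x _ => hcomp x
  exact ⟨hlt, fun hpos => neg_lt_neg (Real.log_lt_log hpos hlt)⟩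

/-- If `s2` is complementary to `s1` (every state achieving the maximal `s1`
self-loop probability `ρ₁` has `s2` self-loop probability `< ρ₁`), then the mixed
strategy choosing `s2` exactly on those maximizers and `s1` elsewhere has spectral
radius `ρ_q < ρ₁`; hence (when `ρ_q > 0`) its asymptotic convergence rate
`-ln ρ_q` exceeds `-ln ρ₁`. -/
theorem stmt6 {S : Type*} [Fintype S] [Nonempty S]
    (P1 P2 : S → ℝ)
    (h01 : ∀ x, 0 ≤ P1 x) (h11 : ∀ x, P1 x ≤ 1)
    (h02 : ∀ x, 0 ≤ P2 x) (h12 : ∀ x, P2 x ≤ 1)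
    (ρ1 : ℝ) (hρ1 : ρ1 = Finset.univ.sup' Finset.univ_nonempty P1)
    (hρ1pos : 0 < ρ1)
    (hcomp : ∀ x, P1 x = ρ1 → P2 x < ρ1) :
    Finset.univ.sup' Finset.univ_nonempty
        (fun x => if P1 x = ρ1 then P2 x else P1 x) < ρ1 ∧
      (0 < Finset.univ.sup' Finset.univ_nonempty
          (fun x => if P1 x = ρ1 then P2 x else P1 x) →
        -Real.log ρ1 <
          -Real.log (Finset.univ.sup' Finset.univ_nonempty
            (fun x => if P1 x = ρ1 then P2 x else P1 x))) :=
  stmt6_general P1 P2 ρ1 hρ1 hcomp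
end

section
/- Let s1, ..., sκ be mutually complementary mutation operators on f: for every non-optimal x and every index l with P_{sl}(x,x) ≥ ρ_min := min_k ρ_k (where ρ_k = max_y P_{sk}(y,y)), there exists k ≠ l with P_{sk}(x,x) < ρ_min. Then there exists a function σ : S_non → {1,...,κ} (a deterministic state-dependent strategy) such that max_x P_{sσ(x)}(x,x) < ρ_min; consequently the mixed strategy EA using σ has asymptotic convergence rate strictly larger than that of every pure strategy EA: −ln(max_x P_{sσ(x)}(x,x)) > max_k (−ln ρ_k). -/
lemma exists_lt_of_forall_le_imp_exists_lt {ι : Type*} [Nonempty ι] {f : ι → ℝ} {ρ : ℝ}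
    (hcomp : ∀ l, ρ ≤ f l → ∃ k, k ≠ l ∧ f k < ρ) : ∃ k, f k < ρ := by
  by_contra! hall
  obtain ⟨k, -, hk⟩ := hcomp (Classical.arbitrary ι) (hall _)
  exact (hall k).not_gt hk

lemma exists_selector_sup'_lt {S ι : Type*} [Fintype S] [Nonempty S] {P : ι → S → ℝ} {ρ : ℝ}
    (h : ∀ x, ∃ k, P k x < ρ) :
    ∃ σ : S → ι, Finset.univ.sup' Finset.univ_nonempty (fun x => P (σ x) x) < ρ := by
  choose σ hσ using h
  exact ⟨σ, (Finset.sup'_lt_iff _).2 fun x _ => hσ x⟩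

theorem stmt8_general {S : Type*} [Fintype S] [Nonempty S] {κ : ℕ} [NeZero κ]
    (P : Fin κ → S → ℝ)
    (ρmin : ℝ)
    (hρmin : ρmin = Finset.univ.inf' Finset.univ_nonempty
      (fun k => Finset.univ.sup' Finset.univ_nonempty (P k)))
    (hcomp : ∀ x l, ρmin ≤ P l x → ∃ k, k ≠ l ∧ P k x < ρmin) :
    ∃ σ : S → Fin κ,
      Finset.univ.sup' Finset.univ_nonempty (fun x => P (σ x) x) < ρmin ∧
        (0 < Finset.univ.sup' Finset.univ_nonempty (fun x => P (σ x) x) →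
          ∀ k, -Real.log (Finset.univ.sup' Finset.univ_nonempty (P k)) <
            -Real.log (Finset.univ.sup' Finset.univ_nonempty (fun x => P (σ x) x))) := by
  obtain ⟨σ, hσ⟩ := exists_selector_sup'_lt fun x =>
    exists_lt_of_forall_le_imp_exists_lt (hcomp x)
  refine ⟨σ, hσ, fun hσpos k => neg_lt_neg (Real.log_lt_log hσpos ?_)⟩
  calc _ < ρmin := hσ
    _ ≤ _ := hρmin ▸ Finset.inf'_le _ (Finset.mem_univ k)

/-- If κ mutation operators are mutually complementary, there is a deterministic
state-dependent strategy `σ` whose spectral radius `max_x P_{σ(x)}(x,x)` is below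
`ρ_min = min_k ρ_k`; hence (when positive) its asymptotic convergence rate exceeds
that of every pure strategy EA. -/
theorem stmt8 {S : Type*} [Fintype S] [Nonempty S] {κ : ℕ} [NeZero κ]
    (P : Fin κ → S → ℝ)
    (h0 : ∀ k x, 0 ≤ P k x) (h1 : ∀ k x, P k x ≤ 1)
    (hpos : ∀ k, 0 < Finset.univ.sup' Finset.univ_nonempty (P k))
    (ρmin : ℝ)
    (hρmin : ρmin = Finset.univ.inf' Finset.univ_nonempty
      (fun k => Finset.univ.sup' Finset.univ_nonempty (P k)))
    (hcomp : ∀ x l, ρmin ≤ P l x → ∃ k, k ≠ l ∧ P k x < ρmin) :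
    ∃ σ : S → Fin κ,
      Finset.univ.sup' Finset.univ_nonempty (fun x => P (σ x) x) < ρmin ∧
        (0 < Finset.univ.sup' Finset.univ_nonempty (fun x => P (σ x) x) →
          ∀ k, -Real.log (Finset.univ.sup' Finset.univ_nonempty (P k)) <
            -Real.log (Finset.univ.sup' Finset.univ_nonempty (fun x => P (σ x) x))) :=
  stmt8_general P ρmin hρmin hcomp
end

section
/- Under the mutual complementarity hypothesis, if additionally ρ_min = min_k ρ_k < 1, then the asymptotic hitting time of the constructed mixed strategy EA satisfies 1/(1 − ρ_σ) < 1/(1 − ρ_k) for every k, where ρ_σ = max_x P_{sσ(x)}(x,x) < ρ_min ≤ ρ_k. -/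
open scoped ENNReal

/-- Asymptotic hitting time of an EA with spectral radius `ρ`: `1/(1-ρ)` if
`ρ < 1`, and `+∞` if `ρ = 1` (or more). -/
noncomputable def hittingTime (ρ : ℝ) : ℝ≥0∞ :=
  if ρ < 1 then ENNReal.ofReal (1 / (1 - ρ)) else ⊤

theorem hittingTime_lt_hittingTime {a b : ℝ} (ha : a < 1) (hab : a < b) :
    hittingTime a < hittingTime b := by
  unfold hittingTime
  rw [if_pos ha]
  split_ifs with hb
  · have hb' : 0 < 1 - b := sub_pos.2 hb
    exact (ENNReal.ofReal_lt_ofReal_iff (by positivity)).2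
      (one_div_lt_one_div_of_lt hb' (by linarith))
  · exact ENNReal.ofReal_lt_top

theorem exists_lt_of_complementary {ι α : Type*} [Nonempty ι] (P : ι → α → ℝ) {c : ℝ}
    (hcomp : ∀ x l, c ≤ P l x → ∃ k, k ≠ l ∧ P k x < c) (x : α) : ∃ k, P k x < c := by
  by_contra! h
  obtain ⟨k, -, hk⟩ := hcomp x (Classical.arbitrary ι) (h _)
  exact (h k).not_gt hk

theorem stmt9_general {S : Type*} [Fintype S] [Nonempty S] {κ : ℕ} [NeZero κ]
    (P : Fin κ → S → ℝ)
    (ρmin : ℝ)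
    (hρmin : ρmin = Finset.univ.inf' Finset.univ_nonempty
      (fun k => Finset.univ.sup' Finset.univ_nonempty (P k)))
    (hρminlt : ρmin < 1)
    (hcomp : ∀ x l, ρmin ≤ P l x → ∃ k, k ≠ l ∧ P k x < ρmin) :
    ∃ σ : S → Fin κ,
      Finset.univ.sup' Finset.univ_nonempty (fun x => P (σ x) x) < ρmin ∧
        ∀ k, hittingTime (Finset.univ.sup' Finset.univ_nonempty (fun x => P (σ x) x)) <
          hittingTime (Finset.univ.sup' Finset.univ_nonempty (P k)) := by
  choose σ hσ using exists_lt_of_complementary P hcomp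
  have hρσ : Finset.univ.sup' Finset.univ_nonempty (fun x => P (σ x) x) < ρmin :=
    (Finset.sup'_lt_iff _).2 fun x _ => hσ x
  refine ⟨σ, hρσ, fun k => hittingTime_lt_hittingTime (hρσ.trans hρminlt) (hρσ.trans_le ?_)⟩
  rw [hρmin]
  exact Finset.inf'_le _ (Finset.mem_univ k)

/-- Under mutual complementarity with `ρ_min < 1`, the constructed mixed strategy
EA has asymptotic hitting time strictly smaller than that of every pure strategy EA. -/
theorem stmt9 {S : Type*} [Fintype S] [Nonempty S] {κ : ℕ} [NeZero κ]
    (P : Fin κ → S → ℝ)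
    (h0 : ∀ k x, 0 ≤ P k x) (h1 : ∀ k x, P k x ≤ 1)
    (hpos : ∀ k, 0 < Finset.univ.sup' Finset.univ_nonempty (P k))
    (ρmin : ℝ)
    (hρmin : ρmin = Finset.univ.inf' Finset.univ_nonempty
      (fun k => Finset.univ.sup' Finset.univ_nonempty (P k)))
    (hρminlt : ρmin < 1)
    (hcomp : ∀ x l, ρmin ≤ P l x → ∃ k, k ≠ l ∧ P k x < ρmin) :
    ∃ σ : S → Fin κ,
      Finset.univ.sup' Finset.univ_nonempty (fun x => P (σ x) x) < ρmin ∧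
        ∀ k, hittingTime (Finset.univ.sup' Finset.univ_nonempty (fun x => P (σ x) x)) <
          hittingTime (Finset.univ.sup' Finset.univ_nonempty (P k)) :=
  stmt9_general P ρmin hρmin hρminlt hcomp
end

section
/- For the one-bit mutation operator s1 (flip one uniformly random bit) on the fitness function f of Example 3 with strict elitist selection and n ≥ 4 even: every non-optimal state x with |x| < n/2 and |x| odd is a local optimum for s1, i.e., every single-bit flip strictly decreases f, so P_{s1}(x,x) = 1; hence ρ(T_{s1}) = 1 and the asymptotic convergence rate of EA(s1) is R(T_{s1}) = 0. -/
/-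
An odd state `x` with `2|x| < n` has fitness `|x| + 2`, while its one-bit neighbours have
`|x| ± 1` ones, an even number, so their fitness is at most `|x| + 1`: every mutation is
rejected and the chain stays at `x` with probability one. The self-loop probability never
exceeds one, so `ρ(T_{s1}) = 1` and `R = -ln 1 = 0`.
-/

/-- Number of ones of a binary string. -/
def oneCount {n : ℕ} (x : Fin n → Bool) : ℕ :=
  (Finset.univ.filter fun i => x i = true).card

/-- Flip bit `i` of `x`. -/
def flipOne {n : ℕ} (x : Fin n → Bool) (i : Fin n) : Fin n → Bool :=
  Function.update x i (!x i)

/-- The fitness function of Example 3. -/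
def exFitness {n : ℕ} (x : Fin n → Bool) : ℕ :=
  if 2 * oneCount x < n ∧ oneCount x % 2 = 1 then oneCount x + 2 else oneCount x

/-- Self-loop probability of the (1+1) EA with one-bit mutation and strict
elitist selection on fitness `f`. -/
noncomputable def oneBitStayProb {n : ℕ} (f : (Fin n → Bool) → ℕ) (x : Fin n → Bool) : ℝ :=
  ((Finset.univ.filter fun i : Fin n => f (flipOne x i) ≤ f x).card : ℝ) / n

section OneBitMutation

variable {n : ℕ}

lemma flipOne_apply_self (x : Fin n → Bool) (i : Fin n) : flipOne x i i = !x i :=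
  Function.update_self i _ x

lemma flipOne_apply_of_ne (x : Fin n → Bool) {i j : Fin n} (h : j ≠ i) : flipOne x i j = x j :=
  Function.update_of_ne h _ x

lemma oneCount_flipOne_of_true (x : Fin n → Bool) (i : Fin n) (h : x i = true) :
    oneCount (flipOne x i) = oneCount x - 1 := by
  have hones : (Finset.univ.filter fun j => flipOne x i j = true)
      = (Finset.univ.filter fun j => x j = true).erase i := by
    ext j
    rcases eq_or_ne j i with rfl | hj
    · simp [flipOne_apply_self, h]
    · simp [flipOne_apply_of_ne x hj, hj]
  rw [oneCount, hones, Finset.card_erase_of_mem (by simp [h]), oneCount]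

lemma oneCount_flipOne_of_false (x : Fin n → Bool) (i : Fin n) (h : x i = false) :
    oneCount (flipOne x i) = oneCount x + 1 := by
  have hones : (Finset.univ.filter fun j => flipOne x i j = true)
      = insert i (Finset.univ.filter fun j => x j = true) := by
    ext j
    rcases eq_or_ne j i with rfl | hj
    · simp [flipOne_apply_self, h]
    · simp [flipOne_apply_of_ne x hj, hj]
  rw [oneCount, hones, Finset.card_insert_of_notMem (by simp [h]), oneCount]

lemma oneCount_decide_eq (i : Fin n) : oneCount (fun j => decide (j = i)) = 1 := by
  simp [oneCount, Finset.filter_eq']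

lemma oneBitStayProb_le_one (f : (Fin n → Bool) → ℕ) (x : Fin n → Bool) :
    oneBitStayProb f x ≤ 1 := by
  refine div_le_one_of_le₀ ?_ (Nat.cast_nonneg n)
  exact_mod_cast (Finset.card_filter_le _ _).trans_eq (Finset.card_fin n)

lemma oneBitStayProb_eq_one_of_forall_le [NeZero n] {f : (Fin n → Bool) → ℕ}
    {x : Fin n → Bool} (h : ∀ i, f (flipOne x i) ≤ f x) : oneBitStayProb f x = 1 := by
  rw [oneBitStayProb, Finset.filter_true_of_mem fun i _ => h i, Finset.card_univ,
    Fintype.card_fin, div_self (NeZero.ne _)]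

end OneBitMutation

lemma exFitness_flipOne_lt {n : ℕ} {x : Fin n → Bool} (hlt : 2 * oneCount x < n)
    (hodd : oneCount x % 2 = 1) (i : Fin n) : exFitness (flipOne x i) < exFitness x := by
  have hx : exFitness x = oneCount x + 2 := if_pos ⟨hlt, hodd⟩
  have hle : exFitness (flipOne x i) ≤ oneCount x + 1 := by
    unfold exFitness
    cases hxi : x i
    · rw [oneCount_flipOne_of_false x i hxi, if_neg (by omega)]
    · rw [oneCount_flipOne_of_true x i hxi, if_neg (by omega)]
      omega
  omega

theorem stmt13_general (n : ℕ) (hn : 4 ≤ n) :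
    (∀ x : Fin n → Bool, 2 * oneCount x < n → oneCount x % 2 = 1 →
      (∀ i, exFitness (flipOne x i) < exFitness x) ∧ oneBitStayProb exFitness x = 1) ∧
    IsGreatest {p : ℝ | ∃ x : Fin n → Bool, oneCount x < n ∧ p = oneBitStayProb exFitness x}
      1 ∧
    -Real.log 1 = 0 := by
  have local_opt : ∀ x : Fin n → Bool, 2 * oneCount x < n → oneCount x % 2 = 1 →
      (∀ i, exFitness (flipOne x i) < exFitness x) ∧ oneBitStayProb exFitness x = 1 := by
    intro x hlt hodd
    have : NeZero n := ⟨by omega⟩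
    exact ⟨exFitness_flipOne_lt hlt hodd,
      oneBitStayProb_eq_one_of_forall_le fun i => (exFitness_flipOne_lt hlt hodd i).le⟩
  refine ⟨local_opt, ⟨?_, ?_⟩, by simp⟩
  · set e : Fin n → Bool := fun j => decide (j = ⟨0, by omega⟩)
    have hone : oneCount e = 1 := oneCount_decide_eq _
    exact ⟨e, by omega, (local_opt e (by omega) (by omega)).2.symm⟩
  · rintro p ⟨x, -, rfl⟩
    exact oneBitStayProb_le_one _ x

/-- On the fitness of Example 3 with `n ≥ 4` even, every non-optimal state with
`|x| < n/2` and `|x|` odd is a local optimum for one-bit mutation: every single-bit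
flip strictly decreases fitness und the self-loop probability is `1`; hence
`ρ(T_{s1}) = 1` and the asymptotic convergence rate `-ln 1 = 0`. -/
theorem stmt13 (n : ℕ) (hn : 4 ≤ n) (heven : n % 2 = 0) :
    (∀ x : Fin n → Bool, 2 * oneCount x < n → oneCount x % 2 = 1 →
      (∀ i, exFitness (flipOne x i) < exFitness x) ∧ oneBitStayProb exFitness x = 1) ∧
    IsGreatest {p : ℝ | ∃ x : Fin n → Bool, oneCount x < n ∧ p = oneBitStayProb exFitness x}
      1 ∧
    -Real.log 1 = 0 :=
  stmt13_general n hn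
end
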